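/- Let S be a finite nonempty type, K : S → PMF S a Markov transition kernel, and A ⊆ S a set such that for every state s ∈ S there exists n_s ∈ ℕ with P_{n_s}(s)(A) > 0, where P_n(s) is the time-n distribution of the chain started at s. If A is absorbing (K(a)(A) = 1 for all a ∈ A), then there exist N ∈ ℕ and ε > 0 such that P_N(s)(A) ≥ ε for every s ∈ S. -/

import Mathlib

/-!
Since `A` is absorbing, the probability `P_n(s)(A)` of being in `A` at time `n` is monotone
in `n`, so each of the finitely many positivity times `n_s` can be replaced by their maximum,
and the minimum of the finitely many positive values `P_N(s)(A)` is the uniform bound.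
-/

/-- The time-`n` distribution of the Markov chain with transition kernel `K`
started at `s`: `P 0 s` is the point mass at `s` and `P (n+1) s = (P n s).bind K`. -/
noncomputable def chainDist {S : Type*} (K : S → PMF S) : ℕ → S → PMF S
  | 0, s => PMF.pure s
  | n + 1, s => (chainDist K n s).bind K

open Filter

lemma PMF.toOuterMeasure_le_toOuterMeasure_bind {S : Type*} (K : S → PMF S) {A : Set S}
    (hA : ∀ a ∈ A, (K a).toOuterMeasure A = 1) (p : PMF S) :
    p.toOuterMeasure A ≤ (p.bind K).toOuterMeasure A := by
  rw [PMF.toOuterMeasure_bind_apply, PMF.toOuterMeasure_apply]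
  refine ENNReal.tsum_le_tsum fun a => ?_
  by_cases ha : a ∈ A
  · rw [Set.indicator_of_mem ha, hA a ha, mul_one]
  · simp [Set.indicator_of_notMem ha]

lemma chainDist_toOuterMeasure_monotone {S : Type*} (K : S → PMF S) {A : Set S}
    (hA : ∀ a ∈ A, (K a).toOuterMeasure A = 1) (s : S) :
    Monotone fun n => (chainDist K n s).toOuterMeasure A :=
  monotone_nat_of_le_succ fun n =>
    (chainDist K n s).toOuterMeasure_le_toOuterMeasure_bind K hA

lemma ENNReal.exists_pos_forall_le_of_forall_pos {ι : Type*} [Fintype ι] {f : ι → ENNReal}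
    (hf : ∀ i, 0 < f i) : ∃ ε : ENNReal, 0 < ε ∧ ∀ i, ε ≤ f i :=
  ⟨Finset.univ.inf f, (Finset.lt_inf_iff ENNReal.zero_lt_top).2 fun i _ => hf i,
    fun i => Finset.inf_le (Finset.mem_univ i)⟩

theorem absorbing_uniform_accessible_general {S : Type*} [Fintype S]
    (K : S → PMF S) (A : Set S)
    (hacc : ∀ s : S, ∃ n : ℕ, 0 < (chainDist K n s).toOuterMeasure A)
    (hA : ∀ a ∈ A, (K a).toOuterMeasure A = 1) :
    ∃ (N : ℕ) (ε : ENNReal), 0 < ε ∧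
      ∀ s : S, ε ≤ (chainDist K N s).toOuterMeasure A := by
  have heventually : ∀ s, ∀ᶠ n in atTop, 0 < (chainDist K n s).toOuterMeasure A := fun s =>
    let ⟨n, hn⟩ := hacc s
    eventually_atTop.2 ⟨n, fun _ hm => hn.trans_le (chainDist_toOuterMeasure_monotone K hA s hm)⟩
  obtain ⟨N, hpos⟩ := (eventually_all.2 heventually).exists
  exact ⟨N, ENNReal.exists_pos_forall_le_of_forall_pos hpos⟩

/-- Uniform accessibility of an absorbing set: if from every state `s` of the
finite space the chain reaches `A` with positive probability at some finite time,
and `A` is absorbing, then there is a single horizon `N` and a uniform lower bound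
`ε > 0` with `P_N(s)(A) ≥ ε` for every starting state `s`. -/
theorem absorbing_uniform_accessible {S : Type*} [Fintype S] [Nonempty S]
    (K : S → PMF S) (A : Set S)
    (hacc : ∀ s : S, ∃ n : ℕ, 0 < (chainDist K n s).toOuterMeasure A)
    (hA : ∀ a ∈ A, (K a).toOuterMeasure A = 1) :
    ∃ (N : ℕ) (ε : ENNReal), 0 < ε ∧
      ∀ s : S, ε ≤ (chainDist K N s).toOuterMeasure A :=
  absorbing_uniform_accessible_general K A hacc hA
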